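/- arXiv:1505.02236 — 2 statements merged into one kernel-verified Lean document; each statement's English description precedes it below -/
import Mathlib

section
/- Let Φ be a root system in a Euclidean space with chosen base Δ and fundamental dominant weights (ω_α)_{α ∈ Δ}. Let I ⊆ Δ. Then every α ∈ Δ − I can be written as α = Σ_{β ∈ I} b_β β + Σ_{γ ∈ Δ − I} c_γ ω_γ where each coefficient b_β ≤ 0. -/
open scoped RealInnerProductSpace

/-- Abstract form of the statement (R) about root systems: let `(α_δ)_{δ ∈ Δ}` be the
simple roots of a base `Δ` of a root system in a Euclidean space (a linearly independent
family with pairwise non-positive inner products) and let `(ω_δ)_{δ ∈ Δ}` be the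
corresponding fundamental dominant weights (so that `⟪α_i, ω_j⟫ = 0` for `i ≠ j`).
Let `I ⊆ Δ`.  If a simple root `α_a` with `a ∉ I` is expanded as
`α_a = Σ_{β ∈ I} b_β α_β + Σ_{γ ∈ Δ − I} c_γ ω_γ`, then every coefficient `b_β` is `≤ 0`. -/
theorem simple_root_expansion_nonpositive_coeffs
    {E : Type*} [NormedAddCommGroup E] [InnerProductSpace ℝ E]
    {Δ : Type*} [Fintype Δ] [DecidableEq Δ]
    (α ω : Δ → E)
    (hαα : ∀ i j, i ≠ j → ⟪α i, α j⟫ ≤ 0)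
    (hα0 : ∀ i, α i ≠ 0)
    (horth : ∀ i j, i ≠ j → ⟪α i, ω j⟫ = 0)
    (hαli : LinearIndependent ℝ α)
    (I : Finset Δ) (a : Δ) (ha : a ∉ I)
    (b c : Δ → ℝ)
    (hexp : α a = ∑ β ∈ I, b β • α β + ∑ γ ∈ Iᶜ, c γ • ω γ) :
    ∀ β ∈ I, b β ≤ 0 := by
  set P : Finset Δ := I.filter (fun β => 0 < b β) with hP
  set u : E := ∑ β ∈ P, b β • α β with hu
  set w : E := ∑ β ∈ I.filter (fun β => ¬ 0 < b β), b β • α β with hw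
  set z : E := ∑ γ ∈ Iᶜ, c γ • ω γ with hz
  have hPI : ∀ β ∈ P, β ∈ I ∧ 0 < b β := by
    intro β hβ; exact ⟨(Finset.mem_filter.mp hβ).1, (Finset.mem_filter.mp hβ).2⟩
  have hsplit : α a = u + w + z := by
    rw [hexp, hu, hw, hz, Finset.sum_filter_add_sum_filter_not]
  -- ⟪u, α a⟫ ≤ 0
  have h1 : ⟪u, α a⟫ ≤ 0 := by
    rw [hu, sum_inner]
    apply Finset.sum_nonpos
    intro β hβ
    obtain ⟨hβI, hβpos⟩ := hPI β hβ
    rw [real_inner_smul_left]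
    have hne : β ≠ a := fun h => ha (h ▸ hβI)
    exact mul_nonpos_of_nonneg_of_nonpos hβpos.le (hαα β a hne)
  -- ⟪u, w⟫ ≥ 0
  have h2 : 0 ≤ ⟪u, w⟫ := by
    rw [hu, hw, sum_inner]
    apply Finset.sum_nonneg
    intro β hβ
    obtain ⟨hβI, hβpos⟩ := hPI β hβ
    rw [real_inner_smul_left, inner_sum]
    apply mul_nonneg hβpos.le
    apply Finset.sum_nonneg
    intro δ hδ
    obtain ⟨hδI, hδnp⟩ := Finset.mem_filter.mp hδ
    rw [real_inner_smul_right]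
    have hne : β ≠ δ := by
      rintro rfl; exact hδnp hβpos
    nlinarith [not_lt.mp hδnp, hαα β δ hne]
  -- ⟪u, z⟫ = 0
  have h3 : ⟪u, z⟫ = 0 := by
    rw [hu, hz, sum_inner]
    apply Finset.sum_eq_zero
    intro β hβ
    obtain ⟨hβI, _⟩ := hPI β hβ
    rw [real_inner_smul_left, inner_sum]
    rw [Finset.sum_eq_zero, mul_zero]
    intro γ hγ
    have hγI : γ ∉ I := Finset.mem_compl.mp hγ
    have hne : β ≠ γ := by rintro rfl; exact hγI hβI
    rw [real_inner_smul_right, horth β γ hne, mul_zero]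
  -- ⟪u, u⟫ ≤ 0 hence u = 0
  have huu : ⟪u, u⟫ ≤ 0 := by
    have : ⟪u, u⟫ = ⟪u, α a⟫ - ⟪u, w⟫ - ⟪u, z⟫ := by
      rw [hsplit, inner_add_right, inner_add_right]; ring
    rw [this, h3]
    linarith
  have hu0 : u = 0 := by
    have := real_inner_self_nonneg (x := u)
    have : ⟪u, u⟫ = 0 := le_antisymm huu this
    exact inner_self_eq_zero.mp this
  -- linear independence: coefficients on P vanish
  have hcoeff : ∀ β ∈ P, b β = 0 := by
    have := linearIndependent_iff'.mp hαli P b (hu ▸ hu0)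
    exact this
  intro β hβI
  by_contra h
  have hβpos : 0 < b β := lt_of_not_ge fun h' => h h'
  have hβP : β ∈ P := Finset.mem_filter.mpr ⟨hβI, hβpos⟩
  exact hβpos.ne' (hcoeff β hβP)
end

section
/- Let U = A²_k ∪ A²_k be the complement of a k-rational point P₀ in P²_k. Then H¹(U, O_U) ≠ 0. -/
/-!
Work in `k[u, u⁻¹][v]`, where the class `z²/(xy)` is the monomial `u⁻¹v²`. The first chart
sends a monomial `x₀^a x₁^b` to `u^a v^b`, the second to `u^(-(a+b)) v^b`, so neither image
contains `u⁻¹v²` in its monomial support: the `k`-linear functional "coefficient of `u⁻¹v²`"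
kills the image of the Čech differential but not `u⁻¹v²`.
-/

open Polynomial LaurentPolynomial

theorem MvPolynomial.linearMap_aeval_eq_zero {R A M σ : Type*} [CommSemiring R]
    [CommSemiring A] [Algebra R A] [AddCommMonoid M] [Module R M] (L : A →ₗ[R] M) (x : σ → A)
    (h : ∀ s, L (aeval x (monomial s (1 : R))) = 0) (f : MvPolynomial σ R) :
    L (aeval x f) = 0 := by
  have : L ∘ₗ (aeval x).toLinearMap = 0 :=
    (basisMonomials σ R).ext fun s => by simpa using h s
  exact LinearMap.congr_fun this f

theorem MvPolynomial.aeval_monomial_fin_two {R A : Type*} [CommSemiring R] [CommSemiring A]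
    [Algebra R A] (a b : A) (s : Fin 2 →₀ ℕ) :
    aeval ![a, b] (monomial s (1 : R)) = a ^ s 0 * b ^ s 1 := by
  simp [aeval_monomial, Finsupp.prod_fintype, Fin.prod_univ_two]

section LaurentCoeff

variable {R : Type*} [CommSemiring R]

noncomputable def laurentCoeff (n : ℕ) (m : ℤ) : (LaurentPolynomial R)[X] →ₗ[R] R :=
  Finsupp.lapply m ∘ₗ (AddMonoidAlgebra.coeffLinearEquiv R).toLinearMap ∘ₗ
    (lcoeff (LaurentPolynomial R) n).restrictScalars R

lemma laurentCoeff_apply (n : ℕ) (m : ℤ) (p : (LaurentPolynomial R)[X]) :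
    laurentCoeff n m p = (p.coeff n).coeff m := rfl

lemma laurentCoeff_C_T_mul_X_pow (n b : ℕ) (m e : ℤ) :
    laurentCoeff n m (Polynomial.C (T e : LaurentPolynomial R) * X ^ b) =
      if b = n ∧ e = m then (1 : R) else 0 := by
  rw [laurentCoeff_apply, coeff_C_mul_X_pow]
  obtain rfl | hb := eq_or_ne b n
  · simp [eq_comm]
  · simp [hb, hb.symm]

lemma aeval_chart₀_monomial (s : Fin 2 →₀ ℕ) :
    MvPolynomial.aeval ![Polynomial.C (T 1 : LaurentPolynomial R), X]
        (MvPolynomial.monomial s (1 : R)) =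
      Polynomial.C (T (s 0)) * X ^ s 1 := by
  rw [MvPolynomial.aeval_monomial_fin_two, ← map_pow, T_pow, mul_one]

lemma aeval_chart₁_monomial (s : Fin 2 →₀ ℕ) :
    MvPolynomial.aeval ![Polynomial.C (T (-1) : LaurentPolynomial R), X * Polynomial.C (T (-1))]
        (MvPolynomial.monomial s (1 : R)) =
      Polynomial.C (T (-(s 0 + s 1 : ℤ))) * X ^ s 1 := by
  rw [MvPolynomial.aeval_monomial_fin_two, mul_pow, ← map_pow, ← map_pow, T_pow, T_pow, neg_add,
    T_add, map_mul]
  simp only [mul_neg_one]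
  ring

lemma laurentCoeff_aeval_chart₀_of_neg {n : ℕ} {m : ℤ} (hm : m < 0)
    (f : MvPolynomial (Fin 2) R) :
    laurentCoeff n m (MvPolynomial.aeval ![Polynomial.C (T 1 : LaurentPolynomial R), X] f) = 0 :=
  MvPolynomial.linearMap_aeval_eq_zero _ _ (fun s => by
    rw [aeval_chart₀_monomial, laurentCoeff_C_T_mul_X_pow, if_neg]
    omega) f

lemma laurentCoeff_aeval_chart₁_of_pos {n : ℕ} {m : ℤ} (hnm : 0 < m + n)
    (g : MvPolynomial (Fin 2) R) :
    laurentCoeff n m (MvPolynomial.aeval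
      ![Polynomial.C (T (-1) : LaurentPolynomial R), X * Polynomial.C (T (-1))] g) = 0 :=
  MvPolynomial.linearMap_aeval_eq_zero _ _ (fun s => by
    rw [aeval_chart₁_monomial, laurentCoeff_C_T_mul_X_pow, if_neg]
    omega) g

end LaurentCoeff

/-- `H¹(U, O_U) ≠ 0` for `U = ℙ²_k − {P₀}`, computed by the Čech complex of the cover of
`U` by the two standard affine charts `U₀ = {x ≠ 0} ≅ 𝔸²` (coordinates `u = y/x`,
`v = z/x`) and `U₁ = {y ≠ 0} ≅ 𝔸²` (coordinates `s = x/y = 1/u`, `t = z/y = v/u`),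
whose intersection is `Spec k[u, u⁻¹, v]`.  Since the cover has two elements, `H¹` is
the cokernel of the Čech differential
`Γ(U₀, O) × Γ(U₁, O) → Γ(U₀ ∩ U₁, O), (f, g) ↦ f − g`, so `H¹(U, O_U) ≠ 0` says exactly
that this map is not surjective.  Here `Γ(U₀ ∩ U₁, O) = k[u, u⁻¹, v]` is realized as
polynomials in `v` (`Polynomial.X`) with Laurent-polynomial coefficients in `u`. -/
theorem cech_H1_of_projective_plane_minus_point_ne_zero
    (k : Type*) [Field k] :
    ¬ Function.Surjective
      (fun fg : MvPolynomial (Fin 2) k × MvPolynomial (Fin 2) k =>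
        (MvPolynomial.aeval
            ![(Polynomial.C (T 1) : Polynomial (LaurentPolynomial k)), Polynomial.X]
            fg.1 : Polynomial (LaurentPolynomial k)) -
        MvPolynomial.aeval
            ![(Polynomial.C (T (-1)) : Polynomial (LaurentPolynomial k)),
              Polynomial.X * Polynomial.C (T (-1))]
            fg.2) := by
  intro hsurj
  obtain ⟨⟨f, g⟩, hfg⟩ := hsurj (Polynomial.C (T (-1)) * X ^ 2)
  have hcoeff := congrArg (laurentCoeff 2 (-1)) hfg
  rw [map_sub, laurentCoeff_aeval_chart₀_of_neg (by norm_num),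
    laurentCoeff_aeval_chart₁_of_pos (by norm_num), laurentCoeff_C_T_mul_X_pow] at hcoeff
  simp at hcoeff
end
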